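/- Let A be a group and X, Y, W subgroups of A, with X, Y normal in A. If there exists a homomorphism m : (W*X) ×_W (W*Y) → A making the two inclusions W*X → A and W*Y → A (induced by the inclusions of W, X, Y in A) factor through m via the canonical maps ⟨1, ι₁[1,0]⟩ and ⟨ι₁[1,0], 1⟩, and W = A with w = id, then the subgroups X and Y commute elementwise: [X,Y] = 1. -/

import Mathlib

open Monoid

variable {A : Type*} [Group A]

/-- The retraction `[1,0] : A ∗ X →* A` killing the subgroup `X`. -/
def retr (X : Subgroup A) : Coprod A X →* A :=
  Coprod.lift (MonoidHom.id A) (1 : X →* A)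

/-- The evaluation `[1,x] : A ∗ X →* A` induced by the identity and the inclusion. -/
def eval (X : Subgroup A) : Coprod A X →* A :=
  Coprod.lift (MonoidHom.id A) X.subtype

/-- The commutator subgroup `[P, Q]` generated by all `p⁻¹ q⁻¹ p q`. -/
def commSub {G : Type*} [Group G] (P Q : Subgroup G) : Subgroup G :=
  Subgroup.closure {g : G | ∃ p ∈ P, ∃ q ∈ Q, g = p⁻¹ * q⁻¹ * p * q}

/-!
A multiplication on the pullback must satisfy the interchange law
`(x, 1) * (1, y) = (x, y) = (1, y) * (x, 1)` for `x` in the kernel of the first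
retraction and `y` in the kernel of the second. Taking `x ∈ X` and `y ∈ Y` as letters
of the free products, the unit conditions force `m (x, 1) = x` and `m (1, y) = y`,
so `x` and `y` commute.
-/

theorem commSub_eq_bot_iff {G : Type*} [Group G] (P Q : Subgroup G) :
    commSub P Q = ⊥ ↔ ∀ p ∈ P, ∀ q ∈ Q, Commute p q := by
  rw [commSub, eq_bot_iff, Subgroup.closure_le]
  constructor
  · intro h p hp q hq
    have hpq : p⁻¹ * q⁻¹ * p * q = 1 := h ⟨p, hp, q, hq, rfl⟩
    have : (q * p)⁻¹ * (p * q) = 1 := by rw [← hpq]; group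
    exact (inv_mul_eq_one.mp this).symm
  · rintro h _ ⟨p, hp, q, hq, rfl⟩
    rw [SetLike.mem_coe, Subgroup.mem_bot, mul_assoc, (h p hp q hq).eq]
    group

theorem commute_of_mul_on_pullback {M N P G : Type*} [Monoid M] [Monoid N] [Monoid P]
    [Monoid G] (f : M →* P) (g : N →* P) (m : M → N → G)
    (hmul : ∀ (u u' : M) (v v' : N), f u = g v → f u' = g v' →
      m (u * u') (v * v') = m u v * m u' v')
    {u : M} {v : N} (hu : f u = 1) (hv : g v = 1) :
    Commute (m u 1) (m 1 v) := by
  have left : m u 1 * m 1 v = m u v := by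
    simpa using (hmul u 1 1 v (by simp [hu]) (by simp [hv])).symm
  have right : m 1 v * m u 1 = m u v := by
    simpa using (hmul 1 u v 1 (by simp [hv]) (by simp [hu])).symm
  exact left.trans right.symm

@[simp]
theorem retr_inr (X : Subgroup A) (x : X) : retr X (Coprod.inr x) = 1 := by
  simp [retr]

@[simp]
theorem eval_inr (X : Subgroup A) (x : X) : eval X (Coprod.inr x) = x := by
  simp [eval]

theorem stmt17_general (X Y : Subgroup A)
    (m : Coprod A X → Coprod A Y → A)
    (hmul : ∀ (u u' : Coprod A X) (v v' : Coprod A Y),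
      retr X u = retr Y v → retr X u' = retr Y v' →
      m (u * u') (v * v') = m u v * m u' v')
    (h1 : ∀ u : Coprod A X, m u (Coprod.inl (retr X u)) = eval X u)
    (h2 : ∀ v : Coprod A Y, m (Coprod.inl (retr Y v)) v = eval Y v) :
    commSub X Y = ⊥ := by
  rw [commSub_eq_bot_iff]
  intro x hx y hy
  have hx1 : m (Coprod.inr ⟨x, hx⟩) 1 = x := by simpa using h1 (Coprod.inr ⟨x, hx⟩)
  have h1y : m 1 (Coprod.inr ⟨y, hy⟩) = y := by simpa using h2 (Coprod.inr ⟨y, hy⟩)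
  rw [← hx1, ← h1y]
  exact commute_of_mul_on_pullback (retr X) (retr Y) m hmul (retr_inr X _) (retr_inr Y _)

/-- (1-weighted centrality, `W = A`, `w = id`.) If `X`, `Y` are normal subgroups of
`A` and there is an internal multiplication `m` on the pullback
`(A ∗ X) ×_A (A ∗ Y) = {(u,v) : [1,0](u) = [1,0](v)}`, multiplicative on the
pullback and restricting to the evaluations `A ∗ X →* A`, `A ∗ Y →* A` along the
canonical maps `⟨1, ι₁[1,0]⟩` and `⟨ι₁[1,0], 1⟩`, then `[X,Y] = 1`. -/
theorem stmt17 (X Y : Subgroup A) [X.Normal] [Y.Normal]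
    (m : Coprod A X → Coprod A Y → A)
    (hmul : ∀ (u u' : Coprod A X) (v v' : Coprod A Y),
      retr X u = retr Y v → retr X u' = retr Y v' →
      m (u * u') (v * v') = m u v * m u' v')
    (h1 : ∀ u : Coprod A X, m u (Coprod.inl (retr X u)) = eval X u)
    (h2 : ∀ v : Coprod A Y, m (Coprod.inl (retr Y v)) v = eval Y v) :
    commSub X Y = ⊥ :=
  stmt17_general X Y m hmul h1 h2
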